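/- For all integers b and c, the group G(−1,b,c) = ⟨x, y | (xy)^{−1} x^b, (xy)^{−1} y^c⟩ is trivial if and only if bc − b − c = 1 or bc − b − c = −1. -/
import Mathlib

/-- The group `G(-1,b,c) = ⟨x, y | (xy)⁻¹ x^b, (xy)⁻¹ y^c⟩`. -/
abbrev Gm1 (b c : ℤ) : Type :=
  PresentedGroup ({(FreeGroup.of 0 * FreeGroup.of 1) ^ (-1 : ℤ) * (FreeGroup.of 0) ^ b,
    (FreeGroup.of 0 * FreeGroup.of 1) ^ (-1 : ℤ) * (FreeGroup.of 1) ^ c} :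
      Set (FreeGroup (Fin 2)))

lemma zmod_aux (m : ℕ) (h : (1 : ZMod m) = 0) : m = 1 := by
  cases m with
  | zero => exact absurd h one_ne_zero
  | succ k =>
      have : (k + 1) ∣ 1 := by
        have := (ZMod.natCast_eq_zero_iff 1 (k + 1)).mp (by exact_mod_cast h)
        exact this
      exact Nat.dvd_one.mp this

theorem stmt_5 (b c : ℤ) :
    Subsingleton (Gm1 b c) ↔ b * c - b - c = 1 ∨ b * c - b - c = -1 := by
  set rels : Set (FreeGroup (Fin 2)) :=
    {(FreeGroup.of 0 * FreeGroup.of 1) ^ (-1 : ℤ) * (FreeGroup.of 0) ^ b,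
      (FreeGroup.of 0 * FreeGroup.of 1) ^ (-1 : ℤ) * (FreeGroup.of 1) ^ c} with hrels
  constructor
  · intro hsub
    -- map to Multiplicative (ZMod n), n = (b*c-b-c).natAbs
    set n : ℕ := (b * c - b - c).natAbs with hn
    set f : Fin 2 → Multiplicative (ZMod n) :=
      ![Multiplicative.ofAdd (1 : ZMod n), Multiplicative.ofAdd ((b : ZMod n) - 1)] with hf
    have key : ((b * c - b - c : ℤ) : ZMod n) = 0 := by
      rw [ZMod.intCast_zmod_eq_zero_iff_dvd]
      exact Int.natAbs_dvd.mpr dvd_rfl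
    have hrel : ∀ r ∈ rels, FreeGroup.lift f r = 1 := by
      intro r hr
      have key' : (b : ZMod n) * c - b - c = 0 := by push_cast at key; linear_combination key
      rcases hr with h | h <;> subst h <;>
        apply Multiplicative.toAdd.injective <;>
        simp only [map_mul, map_zpow, FreeGroup.lift_apply_of, hf,
          Matrix.cons_val_zero, Matrix.cons_val_one, Matrix.head_cons,
          toAdd_mul, toAdd_zpow, toAdd_ofAdd, toAdd_one, zsmul_eq_mul, smul_eq_mul]
      · push_cast; ring
      · push_cast; linear_combination key'

    have h1 : (PresentedGroup.toGroup hrel) (PresentedGroup.of 0) = 1 := by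
      rw [Subsingleton.elim (PresentedGroup.of 0 : Gm1 b c) 1, map_one]
    rw [PresentedGroup.toGroup.of] at h1
    have h2 : (1 : ZMod n) = 0 := by
      have := congrArg Multiplicative.toAdd h1
      simpa [hf] using this
    have hn1 : n = 1 := zmod_aux n h2
    rw [hn] at hn1
    have := Int.natAbs_eq_iff.mp hn1
    simpa using this
  · intro h
    -- relations hold in the quotient
    have mkone : ∀ r ∈ rels, PresentedGroup.mk rels r = 1 := by
      intro r hr
      exact (QuotientGroup.eq_one_iff r).mpr (Subgroup.subset_normalClosure hr)
    set X : Gm1 b c := PresentedGroup.of 0 with hX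
    set Y : Gm1 b c := PresentedGroup.of 1 with hY
    have r1 : (X * Y)⁻¹ * X ^ b = 1 := by
      have := mkone _ (Set.mem_insert _ _)
      simpa [zpow_neg_one, map_mul, map_zpow, hX, hY, PresentedGroup.of] using this
    have r2 : (X * Y)⁻¹ * Y ^ c = 1 := by
      have := mkone _ (Set.mem_insert_of_mem _ rfl)
      simpa [zpow_neg_one, map_mul, map_zpow, hX, hY, PresentedGroup.of] using this
    have e1 : X * Y = X ^ b := by
      rw [← inv_mul_eq_one]; exact r1
    have e2 : X * Y = Y ^ c := by
      rw [← inv_mul_eq_one]; exact r2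
    have hYv : Y = X ^ (b - 1) := by
      have : X * Y = X * X ^ (b - 1) := by
        rw [e1, ← zpow_one_add]; ring_nf
      exact mul_left_cancel this
    have hXv : X = Y ^ (c - 1) := by
      have : X * Y = Y ^ (c - 1) * Y := by
        rw [e2, ← zpow_add_one]; ring_nf
      exact mul_right_cancel (by rw [this])
    have hXpow : X ^ (b * c - b - c) = 1 := by
      have : X = X ^ ((b - 1) * (c - 1)) := by
        rw [zpow_mul, ← hYv, ← hXv]
      calc X ^ (b * c - b - c) = X ^ ((b-1)*(c-1)) * X⁻¹ := by group
        _ = 1 := by rw [← this]; simp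
    have hX1 : X = 1 := by
      rcases h with h | h <;> rw [h] at hXpow <;> simpa using hXpow
    have hY1 : Y = 1 := by rw [hYv, hX1, one_zpow]
    constructor
    intro g g'
    have hall : ∀ g : Gm1 b c, g = 1 := by
      intro g
      have := PresentedGroup.generated_by rels ⊥ (fun j => by
        fin_cases j
        · exact Subgroup.mem_bot.mpr hX1
        · exact Subgroup.mem_bot.mpr hY1) g
      simpa using this
    rw [hall g, hall g']
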